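/- Let X and Y be vector spaces over ℝ and let f : X → Y satisfy: (i) for every line L ⊆ X, the image f '' L is either a point or a line in Y, and (ii) for every line L ⊆ X, if f '' L is a line in Y then the restriction of f to L is injective. If L₀, L₁ ⊆ X are lines that are parallel to each other and both images f '' L₀ and f '' L₁ are lines in Y, then f '' L₀ and f '' L₁ are parallel to each other. -/

import Mathlib

def IsLine {X : Type*} [AddCommGroup X] [Module ℝ X] (L : Set X) : Prop :=
  ∃ o d : X, d ≠ 0 ∧ L = {x | ∃ r : ℝ, x = r • d + o}

def IsPlane {X : Type*} [AddCommGroup X] [Module ℝ X] (E : Set X) : Prop :=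
  ∃ o d₁ d₂ : X, (∀ r s : ℝ, r • d₁ + s • d₂ = 0 → r = 0 ∧ s = 0) ∧
    E = {x | ∃ r s : ℝ, x = r • d₁ + s • d₂ + o}

def IsPoint {X : Type*} (S : Set X) : Prop := ∃ p : X, S = {p}

/-- Two lines are parallel if they are equal or lie in a common plane and are disjoint. -/
def AreParallel {X : Type*} [AddCommGroup X] [Module ℝ X] (L₀ L₁ : Set X) : Prop :=
  L₀ = L₁ ∨ ∃ E : Set X, IsPlane E ∧ L₀ ⊆ E ∧ L₁ ⊆ E ∧ L₀ ∩ L₁ = ∅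

/-!
Parallel lines `L₀ = line o₀ d`, `L₁ = line o₁ d` share a direction `d`, and everything follows
from the fact that the diagonals of a parallelogram with two sides on `L₀` and `L₁` meet.
If the images meet, `f a = f b` with `a ∈ L₀`, `b ∈ L₁`, then `f` collapses the line `ab`, so the
diagonal through `a + d` and `b - d` is mapped onto a line through `f (a + d)` and `f a`, i.e.
onto `f '' L₀`; hence `f (b - d) ≠ f b` is a second common point of the two image lines.
If the images are disjoint, take the plane through `f '' L₀` and `f o₁`: each `f (s • d + o₁)`
is reached through the images of the two diagonals of `o₀, s • d + o₀, s • d + o₁, o₁`,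
each a line with two points in that plane.
-/

open Submodule in
lemma span_pair_eq_of_linearIndependent {K V : Type*} [DivisionRing K] [AddCommGroup V] [Module K V]
    {x y u v : V} (hxy : LinearIndependent K ![x, y]) (huv : LinearIndependent K ![u, v])
    (hx : x ∈ span K {u, v}) (hy : y ∈ span K {u, v}) : span K {x, y} = span K {u, v} := by
  have := FiniteDimensional.span_of_finite K (Set.toFinite {u, v})
  apply eq_of_le_of_finrank_eq (span_le.2 (Set.insert_subset hx (Set.singleton_subset_iff.2 hy)))
  rw [← Matrix.range_cons_cons_empty x y ![], ← Matrix.range_cons_cons_empty u v ![],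
    finrank_span_eq_card hxy, finrank_span_eq_card huv]

section Lines

variable {X : Type*} [AddCommGroup X] [Module ℝ X]

def line (o d : X) : Set X := {x | ∃ r : ℝ, x = r • d + o}

def lineThrough (p q : X) : Set X := line p (q - p)

lemma smul_add_mem_line (o d : X) (r : ℝ) : r • d + o ∈ line o d := ⟨r, rfl⟩

lemma self_mem_line (o d : X) : o ∈ line o d := ⟨0, by module⟩

lemma isLine_line {d : X} (hd : d ≠ 0) (o : X) : IsLine (line o d) := ⟨o, d, hd, rfl⟩

lemma smul_add_injective {d : X} (hd : d ≠ 0) (o : X) : Function.Injective fun r : ℝ => r • d + o :=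
  (add_left_injective o).comp (smul_left_injective ℝ hd)

lemma line_smul {c : ℝ} (hc : c ≠ 0) (o d : X) : line o (c • d) = line o d := by
  ext x
  constructor
  · rintro ⟨r, rfl⟩
    exact ⟨r * c, by module⟩
  · rintro ⟨r, rfl⟩
    exact ⟨r / c, by rw [smul_smul, div_mul_cancel₀ r hc]⟩

lemma line_eq_of_mem {o o' d : X} (h : o' ∈ line o d) : line o' d = line o d := by
  obtain ⟨a, rfl⟩ := h
  ext x
  constructor
  · rintro ⟨r, rfl⟩
    exact ⟨r + a, by module⟩
  · rintro ⟨r, rfl⟩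
    exact ⟨r - a, by module⟩

lemma left_mem_lineThrough (p q : X) : p ∈ lineThrough p q := ⟨0, by module⟩

lemma right_mem_lineThrough (p q : X) : q ∈ lineThrough p q := ⟨1, by module⟩

lemma isLine_lineThrough {p q : X} (h : p ≠ q) : IsLine (lineThrough p q) :=
  ⟨p, q - p, sub_ne_zero.2 h.symm, rfl⟩

lemma IsLine.eq_lineThrough {L : Set X} (hL : IsLine L) {p q : X} (hp : p ∈ L) (hq : q ∈ L)
    (hpq : p ≠ q) : L = lineThrough p q := by
  obtain ⟨o, d, -, rfl⟩ := hL
  show line o d = _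
  obtain ⟨a, rfl⟩ := hp
  obtain ⟨b, rfl⟩ := hq
  have hab : b - a ≠ 0 := sub_ne_zero.2 fun h => hpq (by rw [h])
  rw [lineThrough, show b • d + o - (a • d + o) = (b - a) • d by module, line_smul hab,
    line_eq_of_mem (smul_add_mem_line o d a)]

lemma IsLine.eq_of_mem {L L' : Set X} (hL : IsLine L) (hL' : IsLine L') {p q : X} (hpq : p ≠ q)
    (hp : p ∈ L) (hq : q ∈ L) (hp' : p ∈ L') (hq' : q ∈ L') : L = L' := by
  rw [hL.eq_lineThrough hp hq hpq, hL'.eq_lineThrough hp' hq' hpq]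

lemma IsLine.exists_isPlane_of_notMem {L : Set X} (hL : IsLine L) {z : X} (hz : z ∉ L) :
    ∃ E, IsPlane E ∧ L ⊆ E ∧ z ∈ E := by
  obtain ⟨o, d, hd, rfl⟩ := hL
  refine ⟨_, ⟨o, d, z - o, fun r s h => ?_, rfl⟩, fun x ⟨r, hx⟩ => ⟨r, 0, by rw [hx]; module⟩,
    0, 1, by module⟩
  obtain rfl : s = 0 := by
    by_contra hs
    refine hz ⟨-r / s, ?_⟩
    linear_combination (norm := skip) s⁻¹ • h
    match_scalars <;> field_simp <;> ring
  simp only [zero_smul, add_zero, smul_eq_zero, hd, or_false] at h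
  exact ⟨h, rfl⟩

lemma IsPlane.lineThrough_subset {E : Set X} (hE : IsPlane E) {p q : X} (hp : p ∈ E) (hq : q ∈ E) :
    lineThrough p q ⊆ E := by
  obtain ⟨o, u, v, -, rfl⟩ := hE
  obtain ⟨a, b, rfl⟩ := hp
  obtain ⟨a', b', rfl⟩ := hq
  rintro x ⟨t, rfl⟩
  exact ⟨a + t * (a' - a), b + t * (b' - b), by module⟩

open Submodule in
/-- If the directions were independent they would span the plane's direction, so the
displacement between the two lines would be a combination of them and the lines would meet. -/
lemma exists_common_direction {L₀ L₁ E : Set X} (hL₀ : IsLine L₀) (hL₁ : IsLine L₁)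
    (hE : IsPlane E) (h₀ : L₀ ⊆ E) (h₁ : L₁ ⊆ E) (hdisj : L₀ ∩ L₁ = ∅) :
    ∃ o₀ o₁ d : X, d ≠ 0 ∧ L₀ = line o₀ d ∧ L₁ = line o₁ d := by
  obtain ⟨o₀, d₀, hd₀, rfl⟩ := hL₀
  obtain ⟨o₁, d₁, hd₁, rfl⟩ := hL₁
  suffices ∃ c : ℝ, c • d₀ = d₁ by
    obtain ⟨c, rfl⟩ := this
    exact ⟨o₀, o₁, d₀, hd₀, rfl, line_smul (left_ne_zero_of_smul hd₁) o₁ d₀⟩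
  by_contra! hdir
  obtain ⟨o, u, v, huv, hE⟩ := hE
  have hsub : ∀ p ∈ E, ∀ q ∈ E, q - p ∈ span ℝ {u, v} := by
    rw [hE]
    rintro _ ⟨a, b, rfl⟩ _ ⟨a', b', rfl⟩
    exact mem_span_pair.2 ⟨a' - a, b' - b, by module⟩
  have hspan : span ℝ {d₀, d₁} = span ℝ {u, v} :=
    span_pair_eq_of_linearIndependent ((LinearIndependent.pair_iff' hd₀).2 hdir)
      (LinearIndependent.pair_iff.2 huv)
      (by simpa using hsub _ (h₀ ⟨0, rfl⟩) _ (h₀ ⟨1, rfl⟩))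
      (by simpa using hsub _ (h₁ ⟨0, rfl⟩) _ (h₁ ⟨1, rfl⟩))
  obtain ⟨a, b, hab⟩ := mem_span_pair.1 (hspan ▸ hsub _ (h₀ ⟨0, rfl⟩) _ (h₁ ⟨0, rfl⟩))
  refine (Set.eq_empty_iff_forall_notMem.1 hdisj) (a • d₀ + o₀) ⟨⟨a, rfl⟩, -b, ?_⟩
  linear_combination (norm := module) hab

end Lines

section Maps

variable {X Y : Type*} [AddCommGroup X] [Module ℝ X] [AddCommGroup Y] [Module ℝ Y] {f : X → Y}

/-- Conditions (i) and (ii) of the theorem. -/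
def SendsLinesToLinesOrPoints (f : X → Y) : Prop :=
  (∀ L : Set X, IsLine L → IsPoint (f '' L) ∨ IsLine (f '' L)) ∧
    ∀ L : Set X, IsLine L → IsLine (f '' L) → Set.InjOn f L

namespace SendsLinesToLinesOrPoints

lemma isLine_image (hf : SendsLinesToLinesOrPoints f) {L : Set X} (hL : IsLine L) {p q : X}
    (hp : p ∈ L) (hq : q ∈ L) (hne : f p ≠ f q) : IsLine (f '' L) := by
  refine (hf.1 L hL).resolve_left ?_
  rintro ⟨y, hy⟩
  have hfL : ∀ x ∈ L, f x = y := fun x hx =>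
    (Set.eq_singleton_iff_unique_mem.1 hy).2 _ (Set.mem_image_of_mem f hx)
  exact hne ((hfL p hp).trans (hfL q hq).symm)

lemma apply_eq_of_apply_eq (hf : SendsLinesToLinesOrPoints f) {L : Set X} (hL : IsLine L)
    {p q x : X} (hp : p ∈ L) (hq : q ∈ L) (hpq : p ≠ q) (hfpq : f p = f q) (hx : x ∈ L) :
    f x = f p := by
  by_contra hne
  exact hpq (hf.2 L hL (hf.isLine_image hL hx hp hne) hp hq hfpq)

lemma image_subset_of_isPlane (hf : SendsLinesToLinesOrPoints f) {L : Set X} (hL : IsLine L)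
    {p q : X} (hp : p ∈ L) (hq : q ∈ L) (hne : f p ≠ f q) {E : Set Y} (hE : IsPlane E)
    (hfp : f p ∈ E) (hfq : f q ∈ E) : f '' L ⊆ E := by
  rw [(hf.isLine_image hL hp hq hne).eq_lineThrough (Set.mem_image_of_mem f hp)
    (Set.mem_image_of_mem f hq) hne]
  exact hE.lineThrough_subset hfp hfq

lemma image_eq_of_inter_nonempty (hf : SendsLinesToLinesOrPoints f) {o₀ o₁ d : X} (hd : d ≠ 0)
    (hdisj : Disjoint (line o₀ d) (line o₁ d)) (hfL₀ : IsLine (f '' line o₀ d))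
    (hfL₁ : IsLine (f '' line o₁ d)) (hmeet : (f '' line o₀ d ∩ f '' line o₁ d).Nonempty) :
    f '' line o₀ d = f '' line o₁ d := by
  obtain ⟨-, ⟨_, ⟨r, rfl⟩, rfl⟩, _, ⟨s, rfl⟩, hfba⟩ := hmeet
  set a := r • d + o₀
  set b := s • d + o₁
  set a' := (r + 1) • d + o₀
  set b' := (s - 1) • d + o₁
  have hab : a ≠ b := hdisj.ne_of_mem ⟨r, rfl⟩ ⟨s, rfl⟩
  have hm : f ((2⁻¹ : ℝ) • (a + b)) = f a :=
    hf.apply_eq_of_apply_eq (isLine_lineThrough hab) (left_mem_lineThrough a b)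
      (right_mem_lineThrough a b) hab hfba.symm ⟨2⁻¹, by module⟩
  have ha' : f a' ≠ f ((2⁻¹ : ℝ) • (a + b)) := hm ▸
    (hf.2 _ (isLine_line hd o₀) hfL₀).ne ⟨_, rfl⟩ ⟨_, rfl⟩ ((smul_add_injective hd o₀).ne (by simp))
  have hb' : f b' ≠ f b :=
    (hf.2 _ (isLine_line hd o₁) hfL₁).ne ⟨_, rfl⟩ ⟨_, rfl⟩ ((smul_add_injective hd o₁).ne (by simp))
  have hmR : (2⁻¹ : ℝ) • (a + b) ∈ lineThrough a' b' := ⟨2⁻¹, by module⟩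
  have hR : IsLine (lineThrough a' b') := isLine_lineThrough (hdisj.ne_of_mem ⟨_, rfl⟩ ⟨_, rfl⟩)
  have hRL₀ : f '' lineThrough a' b' = f '' line o₀ d :=
    (hf.isLine_image hR (left_mem_lineThrough a' b') hmR ha').eq_of_mem hfL₀ ha'
      ⟨a', left_mem_lineThrough a' b', rfl⟩ ⟨_, hmR, rfl⟩ ⟨a', ⟨_, rfl⟩, rfl⟩ ⟨a, ⟨r, rfl⟩, hm.symm⟩
  have hb'L₀ : f b' ∈ f '' line o₀ d := hRL₀ ▸ ⟨b', right_mem_lineThrough a' b', rfl⟩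
  exact hfL₀.eq_of_mem hfL₁ hb' hb'L₀ ⟨a, ⟨r, rfl⟩, hfba.symm⟩ ⟨b', ⟨_, rfl⟩, rfl⟩
    ⟨b, ⟨s, rfl⟩, rfl⟩

lemma image_subset_of_disjoint (hf : SendsLinesToLinesOrPoints f) {o₀ o₁ d : X}
    (hdisj : Disjoint (f '' line o₀ d) (f '' line o₁ d)) {E : Set Y} (hE : IsPlane E)
    (h₀ : f '' line o₀ d ⊆ E) (h₁ : f o₁ ∈ E) : f '' line o₁ d ⊆ E := by
  rintro _ ⟨_, ⟨s, rfl⟩, rfl⟩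
  have hne : ∀ x ∈ line o₀ d, ∀ y ∈ line o₁ d, f x ≠ f y := fun x hx y hy =>
    hdisj.ne_of_mem (Set.mem_image_of_mem f hx) (Set.mem_image_of_mem f hy)
  have hne₀ := hne o₀ (self_mem_line o₀ d) (s • d + o₁) ⟨s, rfl⟩
  have hne₁ := hne (s • d + o₀) ⟨s, rfl⟩ o₁ (self_mem_line o₁ d)
  set c := (2⁻¹ : ℝ) • (o₀ + s • d + o₁)
  have hcD : c ∈ lineThrough o₀ (s • d + o₁) := ⟨2⁻¹, by module⟩
  have hcD' : c ∈ lineThrough (s • d + o₀) o₁ := ⟨2⁻¹, by module⟩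
  have hD := isLine_lineThrough (ne_of_apply_ne f hne₀)
  have hfc : f c ∈ E :=
    hf.image_subset_of_isPlane (isLine_lineThrough (ne_of_apply_ne f hne₁))
      (left_mem_lineThrough _ _) (right_mem_lineThrough _ _) hne₁ hE (h₀ ⟨_, ⟨s, rfl⟩, rfl⟩) h₁
      ⟨c, hcD', rfl⟩
  have hco : o₀ ≠ c := fun h =>
    ne_of_apply_ne f hne₀ (by linear_combination (norm := module) (2 : ℝ) • h)
  have hfco : f o₀ ≠ f c := fun h =>
    hne₀ (hf.apply_eq_of_apply_eq hD (left_mem_lineThrough _ _) hcD hco h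
      (right_mem_lineThrough _ _)).symm
  exact hf.image_subset_of_isPlane hD (left_mem_lineThrough _ _) hcD hfco hE
    (h₀ ⟨o₀, self_mem_line o₀ d, rfl⟩) hfc ⟨_, right_mem_lineThrough _ _, rfl⟩

end SendsLinesToLinesOrPoints

end Maps

theorem image_of_parallel_lines
    {X Y : Type*} [AddCommGroup X] [Module ℝ X] [AddCommGroup Y] [Module ℝ Y]
    (f : X → Y)
    (h1 : ∀ L : Set X, IsLine L → IsPoint (f '' L) ∨ IsLine (f '' L))
    (h2 : ∀ L : Set X, IsLine L → IsLine (f '' L) → Set.InjOn f L)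
    (L₀ L₁ : Set X) (hL₀ : IsLine L₀) (hL₁ : IsLine L₁)
    (hpar : AreParallel L₀ L₁)
    (hfL₀ : IsLine (f '' L₀)) (hfL₁ : IsLine (f '' L₁)) :
    AreParallel (f '' L₀) (f '' L₁) := by
  have hf : SendsLinesToLinesOrPoints f := ⟨h1, h2⟩
  rcases hpar with rfl | ⟨E, hE, h₀E, h₁E, hdisj⟩
  · exact Or.inl rfl
  obtain ⟨o₀, o₁, d, hd, rfl, rfl⟩ := exists_common_direction hL₀ hL₁ hE h₀E h₁E hdisj
  rcases (f '' line o₀ d ∩ f '' line o₁ d).eq_empty_or_nonempty with hdisjY | hmeet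
  · have hfo₁ : f o₁ ∉ f '' line o₀ d := fun h =>
      Set.eq_empty_iff_forall_notMem.1 hdisjY _ ⟨h, Set.mem_image_of_mem f (self_mem_line o₁ d)⟩
    obtain ⟨E', hE', h₀, h₁⟩ := hfL₀.exists_isPlane_of_notMem hfo₁
    exact Or.inr ⟨E', hE', h₀,
      hf.image_subset_of_disjoint (Set.disjoint_iff_inter_eq_empty.2 hdisjY) hE' h₀ h₁, hdisjY⟩
  · exact Or.inl (hf.image_eq_of_inter_nonempty hd (Set.disjoint_iff_inter_eq_empty.2 hdisj)
      hfL₀ hfL₁ hmeet)
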